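/- (Surjectivity of the lowering map.) Fix integers m ≥ 1 and k ≥ 1. The restricted lowering map L_k : End(P_k) → End(P_{k−1}), T ↦ Σ_{s=1}^m ∂_s ∘ T ∘ x_s, is surjective: every ℂ-linear endomorphism of P_{k−1} is of the form Σ_s ∂_s ∘ T ∘ x_s for some ℂ-linear endomorphism T of P_k. -/

import Mathlib

open MvPolynomial

noncomputable section

/-- The `k`-photon sector `P_k`: homogeneous polynomials of degree `k` in `m` variables
(the Bargmann realization of the `m`-mode bosonic Fock space). -/
abbrev P (m k : ℕ) : Submodule ℂ (MvPolynomial (Fin m) ℂ) :=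
  homogeneousSubmodule (Fin m) ℂ k

lemma mulX_mem {m d : ℕ} (s : Fin m) {p : MvPolynomial (Fin m) ℂ} (hp : p ∈ P m d) :
    MvPolynomial.X s * p ∈ P m (d + 1) := by
  rw [mem_homogeneousSubmodule] at hp ⊢
  have := (isHomogeneous_X ℂ s).mul hp
  rwa [Nat.add_comm] at this

lemma degree_single_one {m : ℕ} (s : Fin m) : (Finsupp.single s 1).degree = 1 := by
  rw [Finsupp.degree_single]

lemma pderiv_mem {m d : ℕ} (s : Fin m) {p : MvPolynomial (Fin m) ℂ}
    (hp : p ∈ P m (d + 1)) : MvPolynomial.pderiv s p ∈ P m d := by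
  rw [mem_homogeneousSubmodule] at hp
  rw [as_sum p, map_sum]
  apply Submodule.sum_mem
  intro u hu
  rw [pderiv_monomial]
  by_cases h : u s = 0
  · simp [h]
  · rw [mem_homogeneousSubmodule]
    apply isHomogeneous_monomial
    have hle : Finsupp.single s 1 ≤ u :=
      Finsupp.single_le_iff.mpr (Nat.one_le_iff_ne_zero.mpr h)
    have hsum : (u - Finsupp.single s 1) + Finsupp.single s 1 = u :=
      tsub_add_cancel_of_le hle
    have hdeg : u.degree = d + 1 := by
      have hc : coeff u p ≠ 0 := (mem_support_iff).mp hu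
      have := hp hc
      rwa [Finsupp.degree_eq_weight_one]
    have hadd : (u - Finsupp.single s 1).degree + (Finsupp.single s 1).degree = u.degree := by
      simp_rw [Finsupp.degree_eq_weight_one]
      rw [← map_add, hsum]
    rw [degree_single_one] at hadd
    omega

/-- Multiplication by `x_s` as a linear map `P_d → P_{d+1}`. -/
def xRes (m d : ℕ) (s : Fin m) : P m d →ₗ[ℂ] P m (d + 1) :=
  (LinearMap.mulLeft ℂ (MvPolynomial.X s)).restrict fun _q hq => mulX_mem s hq

/-- The partial derivative `∂_s` as a linear map `P_{d+1} → P_d`. -/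
def dRes (m d : ℕ) (s : Fin m) : P m (d + 1) →ₗ[ℂ] P m d :=
  (MvPolynomial.pderiv s).toLinearMap.restrict fun _q hq => pderiv_mem s hq

/-- The restricted lowering map `L_{d+1} : End(P_{d+1}) → End(P_d)`,
`T ↦ Σ_s ∂_s ∘ T ∘ x_s`. -/
def Lres (m d : ℕ) :
    Module.End ℂ (P m (d + 1)) →ₗ[ℂ] Module.End ℂ (P m d) where
  toFun T := ∑ s, dRes m d s ∘ₗ T ∘ₗ xRes m d s
  map_add' T T' := by
    rw [← Finset.sum_add_distrib]
    exact Finset.sum_congr rfl fun s _ => by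
      rw [LinearMap.add_comp, LinearMap.comp_add]
  map_smul' c T := by
    simp [Finset.smul_sum, LinearMap.smul_comp, LinearMap.comp_smul]

/-- The restricted raising map `R_{d+1} : End(P_d) → End(P_{d+1})`,
`T ↦ Σ_s x_s ∘ T ∘ ∂_s`. -/
def Rres (m d : ℕ) :
    Module.End ℂ (P m d) →ₗ[ℂ] Module.End ℂ (P m (d + 1)) where
  toFun T := ∑ s, xRes m d s ∘ₗ T ∘ₗ dRes m d s
  map_add' T T' := by
    rw [← Finset.sum_add_distrib]
    exact Finset.sum_congr rfl fun s _ => by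
      rw [LinearMap.add_comp, LinearMap.comp_add]
  map_smul' c T := by
    simp [Finset.smul_sum, LinearMap.smul_comp, LinearMap.comp_smul]

end

/-! The lowering and raising maps satisfy `L_{k+1} R_{k+1} = (m + 2k) + R_k L_k` on `End(P_k)`,
a consequence of the Weyl relations `∂_s x_t = δ_{st} + x_t ∂_s` and of Euler's identity
`Σ_s x_s ∂_s = k` on `P_k`. Since `L_1 R_1 = m`, induction on `k` shows that `n + L_k R_k` is onto
for every `n : ℕ`, because `c + R L` is onto whenever `c + L R` is and `c ≠ 0`: if
`(c + L R) z = L y`, then `c⁻¹ (y - R z)` is a preimage of `y`. Taking `n = 0`, `L_k` is onto. -/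

theorem LinearMap.surjective_smul_add_comp_swap {K V W : Type*} [Field K]
    [AddCommGroup V] [Module K V] [AddCommGroup W] [Module K W]
    (L : V →ₗ[K] W) (R : W →ₗ[K] V) {c : K} (hc : c ≠ 0)
    (h : Function.Surjective fun w ↦ c • w + L (R w)) :
    Function.Surjective fun v ↦ c • v + R (L v) := by
  intro y
  obtain ⟨z, hz⟩ := h (L y)
  have hLz : L y - L (R z) = c • z := by
    rw [← hz, add_sub_cancel_right]
  refine ⟨c⁻¹ • (y - R z), ?_⟩
  beta_reduce
  rw [map_smul, map_smul, map_sub, hLz, map_smul, smul_smul, smul_smul, mul_inv_cancel₀ hc,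
    inv_mul_cancel₀ hc, one_smul, one_smul, sub_add_cancel]

namespace MvPolynomial

variable {R σ : Type*} [CommSemiring R]

lemma pderiv_X_mul [DecidableEq σ] (s t : σ) (p : MvPolynomial σ R) :
    pderiv s (X t * p) = (if s = t then p else 0) + X t * pderiv s p := by
  rw [Derivation.leibniz, pderiv_X, smul_eq_mul, smul_eq_mul, add_comm]
  split_ifs with h
  · simp [h]
  · simp [Ne.symm h]

lemma pderiv_eq_zero_of_isHomogeneous_zero (s : σ) {p : MvPolynomial σ R}
    (hp : p.IsHomogeneous 0) : pderiv s p = 0 := by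
  rw [← totalDegree_zero_iff_isHomogeneous, totalDegree_eq_zero_iff_eq_C] at hp
  rw [hp, pderiv_C]

end MvPolynomial

section LadderOperators

variable {m j : ℕ}

@[simp]
lemma coe_xRes_apply (s : Fin m) (p : P m j) :
    (xRes m j s p : MvPolynomial (Fin m) ℂ) = X s * (p : MvPolynomial (Fin m) ℂ) :=
  rfl

@[simp]
lemma coe_dRes_apply (s : Fin m) (p : P m (j + 1)) :
    (dRes m j s p : MvPolynomial (Fin m) ℂ) = pderiv s (p : MvPolynomial (Fin m) ℂ) :=
  rfl

@[simp]
lemma Lres_apply (T : Module.End ℂ (P m (j + 1))) :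
    Lres m j T = ∑ s, dRes m j s ∘ₗ T ∘ₗ xRes m j s := rfl

@[simp]
lemma Rres_apply (T : Module.End ℂ (P m j)) :
    Rres m j T = ∑ s, xRes m j s ∘ₗ T ∘ₗ dRes m j s := rfl

lemma dRes_comp_xRes_zero (s t : Fin m) :
    dRes m 0 s ∘ₗ xRes m 0 t = if s = t then 1 else 0 := by
  ext p : 1
  apply Subtype.ext
  have hp : pderiv s (p : MvPolynomial (Fin m) ℂ) = 0 :=
    pderiv_eq_zero_of_isHomogeneous_zero s ((mem_homogeneousSubmodule _ _).mp p.2)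
  simp only [LinearMap.comp_apply, coe_dRes_apply, coe_xRes_apply, pderiv_X_mul, hp, mul_zero,
    add_zero]
  split_ifs <;> rfl

lemma dRes_comp_xRes_succ (s t : Fin m) :
    dRes m (j + 1) s ∘ₗ xRes m (j + 1) t =
      (if s = t then 1 else 0) + xRes m j t ∘ₗ dRes m j s := by
  ext p : 1
  apply Subtype.ext
  simp only [LinearMap.comp_apply, LinearMap.add_apply, Submodule.coe_add, coe_dRes_apply,
    coe_xRes_apply, pderiv_X_mul]
  split_ifs <;> rfl

lemma sum_xRes_comp_dRes :
    ∑ s, xRes m j s ∘ₗ dRes m j s = ((j + 1 : ℕ) : ℂ) • 1 := by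
  ext p : 1
  apply Subtype.ext
  simp only [LinearMap.sum_apply, LinearMap.comp_apply, AddSubmonoidClass.coe_finsetSum,
    coe_xRes_apply, coe_dRes_apply, LinearMap.smul_apply, Module.End.one_apply,
    Nat.cast_smul_eq_nsmul]
  exact ((mem_homogeneousSubmodule _ _).mp p.2).sum_X_mul_pderiv

lemma Lres_Rres_eq_sum (T : Module.End ℂ (P m j)) :
    Lres m j (Rres m j T) =
      ∑ s, ∑ t, (dRes m j s ∘ₗ xRes m j t) * T * (dRes m j t ∘ₗ xRes m j s) := by
  ext p : 1
  simp only [Lres_apply, Rres_apply, LinearMap.sum_apply, LinearMap.comp_apply,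
    Module.End.mul_apply, map_sum]
  exact Finset.sum_comm

lemma Rres_Lres_eq_sum (T : Module.End ℂ (P m (j + 1))) :
    Rres m j (Lres m j T) =
      ∑ s, ∑ t, (xRes m j t ∘ₗ dRes m j s) * T * (xRes m j s ∘ₗ dRes m j t) := by
  ext p : 1
  simp only [Lres_apply, Rres_apply, LinearMap.sum_apply, LinearMap.comp_apply,
    Module.End.mul_apply, map_sum]

lemma Lres_Rres_zero (T : Module.End ℂ (P m 0)) : Lres m 0 (Rres m 0 T) = (m : ℂ) • T := by
  rw [Lres_Rres_eq_sum]
  simp only [dRes_comp_xRes_zero, ite_mul, mul_ite, one_mul, mul_one, zero_mul, mul_zero,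
    Finset.sum_ite_eq', Finset.mem_univ, if_true]
  rw [Finset.sum_const, Finset.card_univ, Fintype.card_fin, Nat.cast_smul_eq_nsmul]

lemma Lres_Rres_succ (T : Module.End ℂ (P m (j + 1))) :
    Lres m (j + 1) (Rres m (j + 1) T) =
      ((m + 2 * (j + 1) : ℕ) : ℂ) • T + Rres m j (Lres m j T) := by
  rw [Lres_Rres_eq_sum, Rres_Lres_eq_sum]
  simp only [dRes_comp_xRes_succ, add_mul, mul_add, ite_mul, mul_ite, one_mul, mul_one, zero_mul,
    mul_zero, Finset.sum_add_distrib, Finset.sum_ite_eq, Finset.sum_ite_eq', Finset.mem_univ,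
    if_true]
  rw [← Finset.sum_mul, ← Finset.mul_sum, sum_xRes_comp_dRes, Finset.sum_const, Finset.card_univ,
    Fintype.card_fin, smul_mul_assoc, one_mul, mul_smul_comm, mul_one]
  push_cast
  module

lemma surjective_natCast_smul_add_Lres_Rres (hm : 1 ≤ m) (j n : ℕ) :
    Function.Surjective fun T : Module.End ℂ (P m j) ↦ (n : ℂ) • T + Lres m j (Rres m j T) := by
  induction j generalizing n with
  | zero =>
    have hc : (n : ℂ) + m ≠ 0 := by exact_mod_cast (show n + m ≠ 0 by omega)
    intro T
    refine ⟨((n : ℂ) + m)⁻¹ • T, ?_⟩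
    beta_reduce
    rw [Lres_Rres_zero, ← add_smul, smul_smul, mul_inv_cancel₀ hc, one_smul]
  | succ j ih =>
    have hc : ((n + (m + 2 * (j + 1)) : ℕ) : ℂ) ≠ 0 := Nat.cast_ne_zero.mpr (by omega)
    have := LinearMap.surjective_smul_add_comp_swap (V := Module.End ℂ (P m (j + 1)))
      (W := Module.End ℂ (P m j)) (Lres m j) (Rres m j) hc (ih (n + (m + 2 * (j + 1))))
    simpa only [Lres_Rres_succ, ← add_assoc, ← add_smul, Nat.cast_add] using this

end LadderOperators

/-- Surjectivity of the lowering map. For `m ≥ 1` and `k ≥ 1`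
(here `k = j + 1`), the restricted lowering map `L_k : End(P_k) → End(P_{k−1})`,
`T ↦ Σ_s ∂_s ∘ T ∘ x_s`, is surjective. -/
theorem stmt15 (m j : ℕ) (hm : 1 ≤ m) (T' : Module.End ℂ (P m j)) :
    ∃ T : Module.End ℂ (P m (j + 1)), Lres m j T = T' := by
  obtain ⟨T, hT⟩ := surjective_natCast_smul_add_Lres_Rres hm j 0 T'
  exact ⟨Rres m j T, by simpa only [Nat.cast_zero, zero_smul, zero_add] using hT⟩
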